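/- Let |α₀⟩, |α₁⟩ be unit vectors in A⊗B with orthogonal reduced states on A, i.e. F(α₀^A, α₁^A) = 0, and let θ ∈ (0, π) with θ ≠ π/2. Define |α_θ⟩ = cos(θ/2)|α₀⟩ + e^{iφ}sin(θ/2)|α₁⟩ and |α_{θ−π}⟩ = cos((θ−π)/2)|α₀⟩ + e^{iφ}sin((θ−π)/2)|α₁⟩. Then D_tr(α_θ^B, α_{θ−π}^B) ≤ |cos θ| < 1; in particular α_θ^B and α_{θ−π}^B are not orthogonal. -/

import Mathlib

open Matrix Kronecker
open scoped ComplexOrder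
noncomputable section

open scoped Classical in
/-- total matrix square root: the PSD square root when `M` is PSD, else `0`. -/
def matSqrt {n : Type*} [Fintype n] [DecidableEq n] (M : Matrix n n ℂ) : Matrix n n ℂ :=
  if h : M.PosSemidef then
    (h.1.eigenvectorUnitary : Matrix n n ℂ) *
      diagonal ((RCLike.ofReal : ℝ → ℂ) ∘ Real.sqrt ∘ h.1.eigenvalues) *
      (star h.1.eigenvectorUnitary : Matrix n n ℂ)
  else 0

/-- trace (Schatten-1) norm `Tr √(MᴴM)`. -/
def traceNorm {n : Type*} [Fintype n] [DecidableEq n] (M : Matrix n n ℂ) : ℝ :=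
  (matSqrt (Mᴴ * M)).trace.re

/-- trace distance. -/
def traceDist {n : Type*} [Fintype n] [DecidableEq n] (ρ σ : Matrix n n ℂ) : ℝ :=
  traceNorm (ρ - σ) / 2

/-- fidelity `‖√ρ√σ‖₁`. -/
def fidelity {n : Type*} [Fintype n] [DecidableEq n] (ρ σ : Matrix n n ℂ) : ℝ :=
  traceNorm (matSqrt ρ * matSqrt σ)

/-- partial trace over the first tensor factor. -/
def trFst {a b : Type*} [Fintype a] (M : Matrix (a × b) (a × b) ℂ) : Matrix b b ℂ :=
  Matrix.of fun i j => ∑ k, M (k, i) (k, j)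

/-- partial trace over the second tensor factor. -/
def trSnd {a b : Type*} [Fintype b] (M : Matrix (a × b) (a × b) ℂ) : Matrix a a ℂ :=
  Matrix.of fun i j => ∑ k, M (i, k) (j, k)

/-- rank-one projector `|v⟩⟨v|`. -/
def outerP {n : Type*} (v : n → ℂ) : Matrix n n ℂ :=
  Matrix.of fun i j => v i * star (v j)

/-- tensor product of vectors. -/
def vkron {a b : Type*} (v : a → ℂ) (w : b → ℂ) : a × b → ℂ :=
  fun p => v p.1 * w p.2


/-- the superposition `cos(θ/2)|α₀⟩ + e^{iφ} sin(θ/2)|α₁⟩`. -/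
def supvec {A B : Type*} (a0 a1 : A × B → ℂ) (th ph : ℝ) : A × B → ℂ :=
  ((Real.cos (th/2) : ℂ)) • a0 + (Complex.exp (Complex.I * ph) * (Real.sin (th/2) : ℂ)) • a1


set_option linter.unusedSectionVars false
set_option maxHeartbeats 1000000

section Aux
variable {n : Type*} [Fintype n] [DecidableEq n]
open scoped MatrixOrder

lemma matSqrt_eq_sqrt {M : Matrix n n ℂ} (h : M.PosSemidef) : matSqrt M = CFC.sqrt M := by
  rw [matSqrt, dif_pos h, CFC.sqrt_eq_cfc, cfc_nnreal_eq_real _ M, h.1.cfc_eq]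
  simp only [IsHermitian.cfc, Unitary.conjStarAlgAut_apply]
  congr 3
  funext i
  simp [Real.coe_sqrt, Real.coe_toNNReal', h.eigenvalues_nonneg i]

lemma psd_diag_nonneg {M : Matrix n n ℂ} (h : M.PosSemidef) (i : n) : 0 ≤ M i i := by
  exact h.diag_nonneg

lemma psd_trace_re_nonneg {M : Matrix n n ℂ} (h : M.PosSemidef) : 0 ≤ M.trace.re := by
  have : ∀ i, 0 ≤ (M i i).re := fun i => (Complex.le_def.mp (psd_diag_nonneg h i)).1
  simpa [Matrix.trace, Matrix.diag, Complex.re_sum] using Finset.sum_nonneg (fun i _ => this i)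

lemma psd_smul {M : Matrix n n ℂ} (h : M.PosSemidef) {r : ℝ} (hr : 0 ≤ r) :
    ((r : ℂ) • M).PosSemidef := by
  constructor
  · unfold Matrix.IsHermitian
    rw [conjTranspose_smul, h.1.eq]
    simp
  · exact (h.smul (α := ℂ) (by exact_mod_cast hr)).2

lemma traceNorm_hermitian (H : Matrix n n ℂ) (hH : H.IsHermitian) :
    traceNorm H = ∑ i, |hH.eigenvalues i| := by
  set U : Matrix n n ℂ := (hH.eigenvectorUnitary : Matrix n n ℂ) with hUdef
  have hUU : U * Uᴴ = 1 := by
    rw [← Matrix.star_eq_conjTranspose]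
    exact (Matrix.mem_unitaryGroup_iff).mp hH.eigenvectorUnitary.2
  have hUU' : Uᴴ * U = 1 := by
    rw [← Matrix.star_eq_conjTranspose]
    exact (Matrix.mem_unitaryGroup_iff').mp hH.eigenvectorUnitary.2
  set Dabs : Matrix n n ℂ := diagonal (fun i => ((|hH.eigenvalues i| : ℝ) : ℂ)) with hDabsdef
  set D : Matrix n n ℂ := diagonal (RCLike.ofReal ∘ hH.eigenvalues) with hDdef
  set S : Matrix n n ℂ := U * Dabs * Uᴴ with hSdef
  have hdiagPSD : Dabs.PosSemidef := by
    apply Matrix.PosSemidef.diagonal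
    intro i
    simp only [Pi.zero_apply]
    exact_mod_cast abs_nonneg (hH.eigenvalues i)
  have hS : S.PosSemidef := hdiagPSD.mul_mul_conjTranspose_same U
  have hHH : (Hᴴ * H).PosSemidef := Matrix.posSemidef_conjTranspose_mul_self H
  have hspec : H = U * D * Uᴴ := by
    rw [← Matrix.star_eq_conjTranspose]; exact hH.spectral_theorem
  have key : ∀ X Y : Matrix n n ℂ, (U*X*Uᴴ) * (U*Y*Uᴴ) = U * (X*Y) * Uᴴ := by
    intro X Y
    rw [show (U*X*Uᴴ)*(U*Y*Uᴴ) = U*(X*((Uᴴ*U)*Y))*Uᴴ by noncomm_ring, hUU', Matrix.one_mul]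
  have hDD : Dabs * Dabs = D * D := by
    have habs : (fun i => ((|hH.eigenvalues i| : ℝ) : ℂ) * ((|hH.eigenvalues i| : ℝ) : ℂ))
        = fun i => (RCLike.ofReal ∘ hH.eigenvalues) i * (RCLike.ofReal ∘ hH.eigenvalues) i := by
      funext i
      rw [← Complex.ofReal_mul, abs_mul_abs_self]
      norm_num
    rw [hDabsdef, hDdef, diagonal_mul_diagonal, diagonal_mul_diagonal, habs]
  have hsq : S ^ 2 = Hᴴ * H := by
    rw [hH.eq, pow_two, hSdef, hspec, key, key, hDD]
  have hmat : matSqrt (Hᴴ * H) = S := by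
    rw [matSqrt_eq_sqrt hHH]
    exact CFC.sqrt_unique (by rw [← pow_two]; exact hsq) hS.nonneg
  rw [traceNorm, hmat, hSdef, Matrix.trace_mul_cycle, hUU', Matrix.one_mul, hDabsdef,
    Matrix.trace_diagonal, Complex.re_sum]
  norm_num

lemma traceNorm_sub_le {B0 B1 : Matrix n n ℂ} (h0 : B0.PosSemidef) (h1 : B1.PosSemidef) :
    traceNorm (B0 - B1) ≤ B0.trace.re + B1.trace.re := by
  set H : Matrix n n ℂ := B0 - B1 with hHdef
  have hH : H.IsHermitian := h0.1.sub h1.1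
  rw [traceNorm_hermitian H hH]
  set U : Matrix n n ℂ := (hH.eigenvectorUnitary : Matrix n n ℂ) with hUdef
  have hUU : U * Uᴴ = 1 := by
    rw [← Matrix.star_eq_conjTranspose]
    exact (Matrix.mem_unitaryGroup_iff).mp hH.eigenvectorUnitary.2
  set P0 : Matrix n n ℂ := Uᴴ * B0 * U with hP0def
  set P1 : Matrix n n ℂ := Uᴴ * B1 * U with hP1def
  have hP0 : P0.PosSemidef := h0.conjTranspose_mul_mul_same U
  have hP1 : P1.PosSemidef := h1.conjTranspose_mul_mul_same U
  have hdiag : P0 - P1 = diagonal (RCLike.ofReal ∘ hH.eigenvalues) := by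
    rw [hP0def, hP1def, ← Matrix.sub_mul, ← Matrix.mul_sub, ← hHdef,
      ← Matrix.star_eq_conjTranspose]
    simpa [Unitary.conjStarAlgAut_apply] using hH.conjStarAlgAut_star_eigenvectorUnitary
  have heig : ∀ i, hH.eigenvalues i = (P0 i i).re - (P1 i i).re := by
    intro i
    have := congrFun (congrFun (congrArg (fun M => (M : Matrix n n ℂ)) hdiag) i) i
    simp only [Matrix.sub_apply, Matrix.diagonal_apply_eq, Function.comp_apply] at this
    have := congrArg Complex.re this
    simpa [Complex.sub_re] using this.symm
  have hbound : ∀ i, |hH.eigenvalues i| ≤ (P0 i i).re + (P1 i i).re := by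
    intro i
    rw [heig i]
    have n0 : 0 ≤ (P0 i i).re := (Complex.le_def.mp (psd_diag_nonneg hP0 i)).1
    have n1 : 0 ≤ (P1 i i).re := (Complex.le_def.mp (psd_diag_nonneg hP1 i)).1
    rw [abs_sub_comm]
    calc |(P1 i i).re - (P0 i i).re| ≤ |(P1 i i).re| + |(P0 i i).re| := abs_sub _ _
      _ = (P0 i i).re + (P1 i i).re := by rw [abs_of_nonneg n0, abs_of_nonneg n1]; ring
  calc ∑ i, |hH.eigenvalues i| ≤ ∑ i, ((P0 i i).re + (P1 i i).re) :=
        Finset.sum_le_sum (fun i _ => hbound i)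
    _ = P0.trace.re + P1.trace.re := by
        rw [Finset.sum_add_distrib]
        simp [Matrix.trace, Matrix.diag, Complex.re_sum]
    _ = B0.trace.re + B1.trace.re := by
        rw [hP0def, hP1def, Matrix.trace_mul_cycle, hUU, Matrix.one_mul,
          Matrix.trace_mul_cycle, hUU, Matrix.one_mul]

lemma trace_conjTranspose_mul_self {m : Type*} [Fintype m]
    (X : Matrix m n ℂ) :
    (Xᴴ * X).trace = ((∑ j, ∑ i, Complex.normSq (X i j) : ℝ) : ℂ) := by
  simp only [Matrix.trace, Matrix.diag, Matrix.mul_apply, Matrix.conjTranspose_apply]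
  push_cast
  congr 1; funext j; congr 1; funext i
  rw [Complex.star_def, Complex.normSq_eq_conj_mul_self]

lemma eq_zero_of_trace_conjTranspose_mul_self {m : Type*} [Fintype m]
    (X : Matrix m n ℂ) (h : (Xᴴ * X).trace = 0) : X = 0 := by
  rw [trace_conjTranspose_mul_self] at h
  have h' : (∑ j, ∑ i, Complex.normSq (X i j) : ℝ) = 0 := by exact_mod_cast h
  ext i j
  have h1 : ∀ j ∈ Finset.univ, (0:ℝ) ≤ ∑ i, Complex.normSq (X i j) :=
    fun j _ => Finset.sum_nonneg fun i _ => Complex.normSq_nonneg _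
  have h2 := (Finset.sum_eq_zero_iff_of_nonneg h1).mp h' j (Finset.mem_univ j)
  have h3 := (Finset.sum_eq_zero_iff_of_nonneg
    (fun i _ => Complex.normSq_nonneg (X i j))).mp h2 i (Finset.mem_univ i)
  simpa using Complex.normSq_eq_zero.mp h3

lemma psd_eq_zero_of_trace_re {M : Matrix n n ℂ} (h : M.PosSemidef) (ht : M.trace.re = 0) :
    M = 0 := by
  obtain ⟨Y, hY⟩ : ∃ Y : Matrix n n ℂ, M = Yᴴ * Y := ⟨CFC.sqrt M, by
    rw [(CFC.sqrt_nonneg M).posSemidef.1.eq, CFC.sqrt_mul_sqrt_self M h.nonneg]⟩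
  subst hY
  have := trace_conjTranspose_mul_self Y
  rw [this] at ht
  simp only [Complex.ofReal_re] at ht
  rw [eq_zero_of_trace_conjTranspose_mul_self Y (by rw [this, ht]; simp)]
  simp

lemma matSqrt_mul_self {M : Matrix n n ℂ} (h : M.PosSemidef) : matSqrt M * matSqrt M = M := by
  rw [matSqrt_eq_sqrt h]; exact CFC.sqrt_mul_sqrt_self M h.nonneg

lemma psd_matSqrt {M : Matrix n n ℂ} (h : M.PosSemidef) : (matSqrt M).PosSemidef := by
  rw [matSqrt_eq_sqrt h]; exact (CFC.sqrt_nonneg M).posSemidef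

lemma mul_eq_zero_of_fidelity {ρ σ : Matrix n n ℂ} (hρ : ρ.PosSemidef) (hσ : σ.PosSemidef)
    (h : fidelity ρ σ = 0) : ρ * σ = 0 := by
  set X := matSqrt ρ * matSqrt σ with hX
  have hXX : (Xᴴ * X).PosSemidef := Matrix.posSemidef_conjTranspose_mul_self X
  have hsqrt0 : matSqrt (Xᴴ * X) = 0 := by
    apply psd_eq_zero_of_trace_re (psd_matSqrt hXX)
    exact h
  have hXX0 : Xᴴ * X = 0 := by
    rw [← matSqrt_mul_self hXX, hsqrt0, Matrix.mul_zero]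
  have hX0 : X = 0 := eq_zero_of_trace_conjTranspose_mul_self X (by rw [hXX0]; simp)
  calc ρ * σ = (matSqrt ρ * matSqrt ρ) * (matSqrt σ * matSqrt σ) := by
        rw [matSqrt_mul_self hρ, matSqrt_mul_self hσ]
    _ = matSqrt ρ * X * matSqrt σ := by rw [hX]; noncomm_ring
    _ = 0 := by rw [hX0, Matrix.mul_zero, Matrix.zero_mul]

end Aux

section Aux2
variable {A B : Type*} [Fintype A] [DecidableEq A] [Fintype B] [DecidableEq B]

lemma trFst_outerP_eq (v : A × B → ℂ) :
    trFst (outerP v) = (Matrix.of fun (k : A) (i : B) => star (v (k, i)))ᴴ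
      * (Matrix.of fun (k : A) (i : B) => star (v (k, i))) := by
  ext i j
  simp [trFst, outerP, Matrix.mul_apply, Matrix.conjTranspose_apply, mul_comm]

lemma trSnd_outerP_eq (v : A × B → ℂ) :
    trSnd (outerP v) = (Matrix.of fun (i : B) (k : A) => star (v (k, i)))ᴴ
      * (Matrix.of fun (i : B) (k : A) => star (v (k, i))) := by
  ext k k'
  simp [trSnd, outerP, Matrix.mul_apply, Matrix.conjTranspose_apply, mul_comm]

lemma psd_trFst (v : A × B → ℂ) : (trFst (outerP v)).PosSemidef := by
  rw [trFst_outerP_eq]; exact Matrix.posSemidef_conjTranspose_mul_self _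

lemma psd_trSnd (v : A × B → ℂ) : (trSnd (outerP v)).PosSemidef := by
  rw [trSnd_outerP_eq]; exact Matrix.posSemidef_conjTranspose_mul_self _

lemma trace_trFst_outerP (v : A × B → ℂ) : (trFst (outerP v)).trace = star v ⬝ᵥ v := by
  simp only [Matrix.trace, Matrix.diag, trFst, outerP, dotProduct, Fintype.sum_prod_type,
    Matrix.of_apply, Pi.star_apply, Complex.star_def]
  rw [Finset.sum_comm]
  simp [mul_comm]

lemma cross_zero (a0 a1 : A × B → ℂ)
    (hF : fidelity (trSnd (outerP a0)) (trSnd (outerP a1)) = 0) :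
    ∀ i j : B, ∑ k, star (a1 (k, i)) * a0 (k, j) = 0 := by
  set N0 : Matrix B A ℂ := Matrix.of fun (i : B) (k : A) => star (a0 (k, i)) with hN0
  set N1 : Matrix B A ℂ := Matrix.of fun (i : B) (k : A) => star (a1 (k, i)) with hN1
  have hmul0 : trSnd (outerP a0) * trSnd (outerP a1) = 0 :=
    mul_eq_zero_of_fidelity (psd_trSnd a0) (psd_trSnd a1) hF
  set X : Matrix B B ℂ := N1 * N0ᴴ with hXdef
  have e0 : N0ᴴ * N0 = trSnd (outerP a0) := by rw [hN0]; exact (trSnd_outerP_eq a0).symm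
  have e1 : N1ᴴ * N1 = trSnd (outerP a1) := by rw [hN1]; exact (trSnd_outerP_eq a1).symm
  have htr : (Xᴴ * X).trace = 0 := by
    have h1 : Xᴴ * X = N0 * (N1ᴴ * N1) * N0ᴴ := by
      rw [hXdef, Matrix.conjTranspose_mul, Matrix.conjTranspose_conjTranspose]
      simp [Matrix.mul_assoc]
    rw [h1, Matrix.trace_mul_cycle, e0, e1, hmul0, Matrix.trace_zero]
  have hX0 : X = 0 := eq_zero_of_trace_conjTranspose_mul_self X htr
  intro i j
  have := congrFun (congrFun (congrArg (fun M => (M : Matrix B B ℂ)) hX0) i) j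
  simp only [Matrix.zero_apply] at this
  rw [← this]
  simp [hXdef, Matrix.mul_apply, hN0, hN1, Matrix.conjTranspose_apply]

end Aux2

lemma psd_trace_mul_re_nonneg {n : Type*} [Fintype n] [DecidableEq n]
    {P Q : Matrix n n ℂ} (hP : P.PosSemidef) (hQ : Q.PosSemidef) :
    0 ≤ (P * Q).trace.re := by
  have h1 : (P * Q).trace = (matSqrt P * Q * matSqrt P).trace := by
    conv_lhs => rw [← matSqrt_mul_self hP]
    rw [Matrix.mul_assoc, Matrix.trace_mul_comm, Matrix.mul_assoc]
  have h2 : (matSqrt P * Q * matSqrt P).PosSemidef := by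
    have := hQ.mul_mul_conjTranspose_same (matSqrt P)
    rwa [(psd_matSqrt hP).1.eq] at this
  rw [h1]
  exact psd_trace_re_nonneg h2

lemma psd_trace_sq_re_pos {n : Type*} [Fintype n] [DecidableEq n]
    {P : Matrix n n ℂ} (hP : P.PosSemidef) (htr : P.trace = 1) :
    0 < (P * P).trace.re := by
  have hherm : Pᴴ = P := hP.1
  have h1 : (P * P).trace = ((∑ j, ∑ i, Complex.normSq (P i j) : ℝ) : ℂ) := by
    conv_lhs => rw [show P * P = Pᴴ * P by rw [hherm]]
    rw [trace_conjTranspose_mul_self]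
  have hnn : (0:ℝ) ≤ ∑ j, ∑ i, Complex.normSq (P i j) :=
    Finset.sum_nonneg fun j _ => Finset.sum_nonneg fun i _ => Complex.normSq_nonneg _
  rcases hnn.lt_or_eq with h | h
  · rw [h1]; simpa using h
  · exfalso
    have hP0 : P = 0 := by
      rw [← hherm]
      apply eq_zero_of_trace_conjTranspose_mul_self
      rw [trace_conjTranspose_mul_self, hherm, ← h]
      simp
    rw [hP0] at htr
    simp at htr

section Aux3
variable {A B : Type*} [Fintype A] [DecidableEq A] [Fintype B] [DecidableEq B]

lemma trFst_outerP_supvec (a0 a1 : A × B → ℂ)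
    (hC : ∀ i j : B, ∑ k, star (a1 (k, i)) * a0 (k, j) = 0) (t ph : ℝ) :
    trFst (outerP (supvec a0 a1 t ph)) =
      ((Real.cos (t/2) ^ 2 : ℝ) : ℂ) • trFst (outerP a0)
        + ((Real.sin (t/2) ^ 2 : ℝ) : ℂ) • trFst (outerP a1) := by
  set c : ℂ := ((Real.cos (t/2) : ℝ) : ℂ) with hc
  set z : ℂ := Complex.exp (Complex.I * ph) * ((Real.sin (t/2) : ℝ) : ℂ) with hz
  have hcc : c * star c = ((Real.cos (t/2)^2 : ℝ) : ℂ) := by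
    rw [hc, Complex.star_def, Complex.conj_ofReal]
    push_cast; ring
  have hzz : z * star z = ((Real.sin (t/2)^2 : ℝ) : ℂ) := by
    rw [hz, star_mul', Complex.star_def, Complex.conj_ofReal, ← Complex.exp_conj, _root_.map_mul,
      Complex.conj_I, Complex.conj_ofReal]
    rw [show Complex.exp (Complex.I * ph) * ((Real.sin (t/2):ℝ):ℂ)
        * (Complex.exp (-Complex.I * ph) * ((Real.sin (t/2):ℝ):ℂ))
        = (Complex.exp (Complex.I * ph) * Complex.exp (-Complex.I * ph))
          * (((Real.sin (t/2):ℝ):ℂ) * ((Real.sin (t/2):ℝ):ℂ)) by ring,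
      ← Complex.exp_add]
    rw [show Complex.I * ph + -Complex.I * ph = 0 by ring, Complex.exp_zero, one_mul]
    push_cast; ring
  ext i j
  show ∑ k : A, (supvec a0 a1 t ph) (k,i) * star ((supvec a0 a1 t ph) (k,j)) = _
  have expand : ∀ k : A, (supvec a0 a1 t ph) (k,i) * star ((supvec a0 a1 t ph) (k,j))
      = (c * star c) * (a0 (k,i) * star (a0 (k,j)))
        + (c * star z) * (star (a1 (k,j)) * a0 (k,i))
        + (z * star c) * star (star (a1 (k,i)) * a0 (k,j))
        + (z * star z) * (a1 (k,i) * star (a1 (k,j))) := by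
    intro k
    simp only [supvec, Pi.add_apply, Pi.smul_apply, smul_eq_mul, star_add, star_mul', star_star,
      ← hc, ← hz]
    ring
  rw [Finset.sum_congr rfl fun k _ => expand k]
  rw [Finset.sum_add_distrib, Finset.sum_add_distrib, Finset.sum_add_distrib,
    ← Finset.mul_sum, ← Finset.mul_sum, ← Finset.mul_sum, ← Finset.mul_sum]
  rw [hC j i, ← star_sum, hC i j, star_zero, mul_zero, mul_zero, add_zero, add_zero]
  rw [hcc, hzz]
  simp [trFst, outerP, Matrix.add_apply, Matrix.smul_apply, smul_eq_mul, Finset.mul_sum]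

end Aux3

theorem stmt7 {A B : Type*} [Fintype A] [DecidableEq A] [Fintype B] [DecidableEq B]
    (a0 a1 : A × B → ℂ) (h0 : star a0 ⬝ᵥ a0 = 1) (h1 : star a1 ⬝ᵥ a1 = 1)
    (hF : fidelity (trSnd (outerP a0)) (trSnd (outerP a1)) = 0)
    (th ph : ℝ) (hth : th ∈ Set.Ioo 0 Real.pi) (hne : th ≠ Real.pi / 2) :
    traceDist (trFst (outerP (supvec a0 a1 th ph)))
        (trFst (outerP (supvec a0 a1 (th - Real.pi) ph))) ≤ |Real.cos th| ∧
    |Real.cos th| < 1 ∧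
    (trFst (outerP (supvec a0 a1 th ph))
        * trFst (outerP (supvec a0 a1 (th - Real.pi) ph))).trace ≠ 0 := by
  obtain ⟨ht0, htpi⟩ := hth
  have hC := cross_zero a0 a1 hF
  set B0 : Matrix B B ℂ := trFst (outerP a0) with hB0
  set B1 : Matrix B B ℂ := trFst (outerP a1) with hB1
  have hpsd0 : B0.PosSemidef := psd_trFst a0
  have hpsd1 : B1.PosSemidef := psd_trFst a1
  have htr0 : B0.trace = 1 := by rw [hB0, trace_trFst_outerP]; exact h0
  have htr1 : B1.trace = 1 := by rw [hB1, trace_trFst_outerP]; exact h1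
  set c : ℝ := Real.cos (th/2) with hcdef
  set s : ℝ := Real.sin (th/2) with hsdef
  have hcpos : 0 < c := Real.cos_pos_of_mem_Ioo ⟨by linarith [Real.pi_pos], by linarith⟩
  have hspos : 0 < s := Real.sin_pos_of_pos_of_lt_pi (by linarith) (by linarith [Real.pi_pos])
  have hd : trFst (outerP (supvec a0 a1 th ph)) = ((c^2 : ℝ) : ℂ) • B0 + ((s^2 : ℝ) : ℂ) • B1 :=
    trFst_outerP_supvec a0 a1 hC th ph
  have hcos2 : Real.cos ((th - Real.pi)/2)^2 = s^2 := by
    rw [show (th - Real.pi)/2 = th/2 - Real.pi/2 by ring, Real.cos_sub_pi_div_two]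
  have hsin2 : Real.sin ((th - Real.pi)/2)^2 = c^2 := by
    rw [show (th - Real.pi)/2 = th/2 - Real.pi/2 by ring, Real.sin_sub_pi_div_two]
    ring
  have hd' : trFst (outerP (supvec a0 a1 (th - Real.pi) ph))
      = ((s^2 : ℝ) : ℂ) • B0 + ((c^2 : ℝ) : ℂ) • B1 := by
    rw [trFst_outerP_supvec a0 a1 hC (th - Real.pi) ph, hcos2, hsin2]
  have hcs : c^2 - s^2 = Real.cos th := by
    rw [← Real.cos_two_mul']
    ring_nf
  -- part 2
  have hcos_lt_one : Real.cos th < 1 := by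
    have := Real.strictAntiOn_cos (Set.mem_Icc.mpr ⟨le_refl 0, Real.pi_pos.le⟩)
      (Set.mem_Icc.mpr ⟨ht0.le, htpi.le⟩) ht0
    simpa using this
  have hcos_gt : -1 < Real.cos th := by
    have := Real.strictAntiOn_cos (Set.mem_Icc.mpr ⟨ht0.le, htpi.le⟩)
      (Set.mem_Icc.mpr ⟨Real.pi_pos.le, le_refl _⟩) htpi
    simpa using this
  have habs : |Real.cos th| < 1 := abs_lt.mpr ⟨hcos_gt, hcos_lt_one⟩
  refine ⟨?_, habs, ?_⟩
  -- part 1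
  · have hsub : trFst (outerP (supvec a0 a1 th ph)) - trFst (outerP (supvec a0 a1 (th - Real.pi) ph))
        = ((Real.cos th : ℝ) : ℂ) • B0 - ((Real.cos th : ℝ) : ℂ) • B1 := by
      rw [hd, hd']
      have hcoef : ((Real.cos th : ℝ) : ℂ) = ((c^2 : ℝ) : ℂ) - ((s^2 : ℝ) : ℂ) := by
        rw [← hcs]; push_cast; ring
      rw [hcoef]
      module
    rw [traceDist, hsub]
    rcases le_or_gt 0 (Real.cos th) with hct | hct
    · have hb := traceNorm_sub_le (psd_smul hpsd0 hct) (psd_smul hpsd1 hct)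
      rw [Matrix.trace_smul, Matrix.trace_smul, htr0, htr1] at hb
      simp only [smul_eq_mul, mul_one] at hb
      rw [abs_of_nonneg hct]
      rw [Complex.ofReal_re] at hb
      linarith
    · have hsub2 : ((Real.cos th : ℝ) : ℂ) • B0 - ((Real.cos th : ℝ) : ℂ) • B1
          = ((-Real.cos th : ℝ) : ℂ) • B1 - ((-Real.cos th : ℝ) : ℂ) • B0 := by
        push_cast
        module
      rw [hsub2]
      have hct' : (0:ℝ) ≤ -Real.cos th := by linarith
      have hb := traceNorm_sub_le (psd_smul hpsd1 hct') (psd_smul hpsd0 hct')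
      rw [Matrix.trace_smul, Matrix.trace_smul, htr0, htr1] at hb
      simp only [smul_eq_mul, mul_one] at hb
      rw [abs_of_neg hct]
      rw [Complex.ofReal_re] at hb
      linarith
  -- part 3
  · rw [hd, hd']
    have hexpand : (((c^2 : ℝ) : ℂ) • B0 + ((s^2 : ℝ) : ℂ) • B1)
        * (((s^2 : ℝ) : ℂ) • B0 + ((c^2 : ℝ) : ℂ) • B1)
        = (((c^2*s^2 : ℝ) : ℂ)) • (B0*B0) + (((c^2*c^2 : ℝ) : ℂ)) • (B0*B1)
          + (((s^2*s^2 : ℝ) : ℂ)) • (B1*B0) + (((s^2*c^2 : ℝ) : ℂ)) • (B1*B1) := by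
      push_cast
      rw [Matrix.add_mul, Matrix.mul_add, Matrix.mul_add]
      rw [Matrix.smul_mul, Matrix.smul_mul, Matrix.smul_mul, Matrix.smul_mul,
        Matrix.mul_smul, Matrix.mul_smul, Matrix.mul_smul, Matrix.mul_smul]
      rw [smul_smul, smul_smul, smul_smul, smul_smul]
      module
    rw [hexpand]
    intro hzero
    have hre := congrArg Complex.re hzero
    rw [Matrix.trace_add, Matrix.trace_add, Matrix.trace_add, Matrix.trace_smul,
      Matrix.trace_smul, Matrix.trace_smul, Matrix.trace_smul] at hre
    simp only [smul_eq_mul, Complex.add_re, Complex.re_ofReal_mul, Complex.zero_re] at hre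
    have r00 : 0 < ((B0*B0).trace).re := psd_trace_sq_re_pos hpsd0 htr0
    have r01 : 0 ≤ ((B0*B1).trace).re := psd_trace_mul_re_nonneg hpsd0 hpsd1
    have r10 : 0 ≤ ((B1*B0).trace).re := psd_trace_mul_re_nonneg hpsd1 hpsd0
    have r11 : 0 ≤ ((B1*B1).trace).re := psd_trace_mul_re_nonneg hpsd1 hpsd1
    nlinarith [sq_nonneg c, sq_nonneg s, mul_pos (mul_pos (mul_pos hcpos hcpos) hspos) hspos,
      mul_pos hcpos hspos]
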